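/- Let G be a finite group that is not a p-group for any prime p, and suppose there exists x ∈ G whose degree in the order superpower graph S(G) equals the minimum degree δ(S(G)), and that δ(S(G)) = κ(S(G)). Then G contains no element of order 2^α for any α ≥ 2. -/

import Mathlib

/-! If `y` has order `2 ^ α` with `α ≥ 2` and `z` has odd prime order (such `z` exists since `G`
is not a `2`-group), then `y` and `z` are non-adjacent, so no vertex of minimum degree is adjacent
to all others. Some vertex `v` of minimum degree has order at least `3`: if the given one has order
`2`, then `y` has at most its degree. Now `v` and `v⁻¹` are distinct adjacent vertices with the same
closed neighbourhood, so deleting the other `δ - 1` neighbours of `v` separates them from a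
non-neighbour of `v`, whence `κ < δ`. -/

/-- The degree of a vertex: the number of its neighbours. -/
noncomputable def gDeg {V : Type*} (G : SimpleGraph V) (v : V) : ℕ :=
  (G.neighborSet v).ncard

/-- The minimum degree of a graph. -/
noncomputable def minDeg {V : Type*} (G : SimpleGraph V) : ℕ :=
  sInf (Set.range (gDeg G))

/-- The edge connectivity: the minimum size of a set of edges whose removal
disconnects the graph. -/
noncomputable def edgeConn {V : Type*} (G : SimpleGraph V) : ℕ :=
  sInf {n : ℕ | ∃ S : Set (Sym2 V), S ⊆ G.edgeSet ∧ S.ncard = n ∧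
    ¬ (G.deleteEdges S).Connected}

/-- The vertex connectivity: the minimum size of a set of vertices whose removal
disconnects the graph or leaves a single vertex. -/
noncomputable def vertexConn {V : Type*} (G : SimpleGraph V) : ℕ :=
  sInf {n : ℕ | ∃ S : Set V, S.ncard = n ∧ Sᶜ.Nonempty ∧
    (¬ (G.induce Sᶜ).Preconnected ∨ Sᶜ.ncard = 1)}

/-- A graph is minimally edge connected if deleting any edge decreases the
edge connectivity by one. -/
def MinEdgeConnected {V : Type*} (G : SimpleGraph V) : Prop :=
  ∀ e ∈ G.edgeSet, edgeConn (G.deleteEdges {e}) = edgeConn G - 1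

/-- A graph is minimally connected if deleting any edge decreases the
vertex connectivity by one. -/
def MinConnected {V : Type*} (G : SimpleGraph V) : Prop :=
  ∀ e ∈ G.edgeSet, vertexConn (G.deleteEdges {e}) = vertexConn G - 1

/-- The power graph of a group: distinct `x, y` are adjacent iff one is a
natural power of the other. -/
def powerGraph (G : Type*) [Group G] : SimpleGraph G :=
  SimpleGraph.fromRel (fun x y => ∃ m : ℕ, y = x ^ m)

/-- The enhanced power graph of a group: distinct `x, y` are adjacent iff they
lie in a common cyclic subgroup. -/
def enhancedPowerGraph (G : Type*) [Group G] : SimpleGraph G :=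
  SimpleGraph.fromRel
    (fun x y => ∃ z : G, x ∈ Subgroup.zpowers z ∧ y ∈ Subgroup.zpowers z)

/-- The order superpower graph of a group: distinct `x, y` are adjacent iff the
order of one divides the order of the other. -/
def superpowerGraph (G : Type*) [Group G] : SimpleGraph G :=
  SimpleGraph.fromRel (fun x y => orderOf x ∣ orderOf y)

section Graph

variable {V : Type*} (G : SimpleGraph V)

theorem minDeg_le_gDeg (v : V) : minDeg G ≤ gDeg G v :=
  Nat.sInf_le ⟨v, rfl⟩

variable [Finite V] {G}

theorem gDeg_le_gDeg_of_adj {x y : V} (hxy : G.Adj x y)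
    (h : ∀ w, w ≠ x → G.Adj y w → G.Adj x w) : gDeg G y ≤ gDeg G x := by
  have hsub : G.neighborSet y ⊆ insert x (G.neighborSet x \ {y}) := by
    intro w hw
    by_cases hwx : w = x
    · exact .inl hwx
    · exact .inr ⟨h w hwx hw, fun hwy => G.loopless.irrefl y (hwy ▸ hw)⟩
  have hpos : 0 < gDeg G x := (Set.ncard_pos (Set.toFinite _)).mpr ⟨y, hxy⟩
  calc gDeg G y ≤ (insert x (G.neighborSet x \ {y})).ncard := Set.ncard_le_ncard hsub
    _ ≤ (G.neighborSet x \ {y}).ncard + 1 := Set.ncard_insert_le _ _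
    _ = gDeg G x := by
      rw [Set.ncard_sdiff_singleton_of_mem (show y ∈ G.neighborSet x from hxy)]
      unfold gDeg at hpos ⊢
      omega

theorem exists_not_adj_of_gDeg_eq_minDeg {y b v : V} (hby : b ≠ y) (hyb : ¬ G.Adj y b)
    (hv : gDeg G v = minDeg G) : ∃ c ≠ v, ¬ G.Adj v c := by
  by_contra! hfull
  have hdeg_v : gDeg G v = Nat.card V - 1 := by
    have : G.neighborSet v = {v}ᶜ := Set.ext fun c => ⟨fun h => h.ne', hfull c⟩
    rw [gDeg, this, Set.ncard_compl, Set.ncard_singleton]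
  have hdeg_y : gDeg G y ≤ Nat.card V - 2 := by
    have hsub : G.neighborSet y ⊆ {y, b}ᶜ := by
      rintro c hc (rfl | rfl)
      exacts [G.loopless.irrefl c hc, hyb hc]
    calc gDeg G y ≤ ({y, b}ᶜ : Set V).ncard := Set.ncard_le_ncard hsub
      _ = Nat.card V - 2 := by rw [Set.ncard_compl, Set.ncard_pair hby.symm]
  have hcard : 2 ≤ Nat.card V := by
    simpa [Set.ncard_pair hby.symm] using Set.ncard_le_card ({y, b} : Set V)
  have := minDeg_le_gDeg G y
  omega

/-- Closed twins `u`, `v` are separated from any non-neighbour of `v` by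
removing `N(v) \ {u}`. -/
theorem vertexConn_lt_gDeg_of_twin {u v b : V} (huv : G.Adj u v)
    (htwin : ∀ w, w ≠ v → G.Adj u w → G.Adj v w) (hbv : b ≠ v) (hvb : ¬ G.Adj v b) :
    vertexConn G < gDeg G v := by
  set S := G.neighborSet v \ {u}
  have hu : u ∈ G.neighborSet v := huv.symm
  have hpos : 0 < gDeg G v := (Set.ncard_pos (Set.toFinite _)).mpr ⟨u, hu⟩
  have hS : S.ncard = gDeg G v - 1 := Set.ncard_sdiff_singleton_of_mem hu
  have hvS : v ∈ Sᶜ := fun h => G.loopless.irrefl v h.1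
  have hbS : b ∈ Sᶜ := fun h => hvb h.1
  have hclosed : ∀ x y : (Sᶜ : Set V), (G.induce Sᶜ).Adj x y →
      (x.1 = u ∨ x.1 = v) → (y.1 = u ∨ y.1 = v) := by
    rintro ⟨x, hxS⟩ ⟨y, hy⟩ hxy hx
    change G.Adj x y at hxy
    by_contra! hy'
    have hvy : G.Adj v y := by
      rcases hx with hx | hx
      exacts [htwin y hy'.2 (hx ▸ hxy), hx ▸ hxy]
    exact hy ⟨hvy, hy'.1⟩
  have hdisc : ¬ (G.induce Sᶜ).Preconnected := by
    intro hpre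
    have hreach : ∀ w, Relation.ReflTransGen (G.induce Sᶜ).Adj ⟨v, hvS⟩ w →
        w.1 = u ∨ w.1 = v := fun w h => by
      induction h with
      | refl => exact .inr rfl
      | tail _ hadj ih => exact hclosed _ _ hadj ih
    rcases hreach ⟨b, hbS⟩ ((SimpleGraph.reachable_iff_reflTransGen _ _).mp (hpre _ _))
      with hb | hb <;> dsimp only at hb <;> subst hb
    exacts [hvb huv.symm, hbv rfl]
  have : vertexConn G ≤ S.ncard := Nat.sInf_le ⟨S, rfl, ⟨v, hvS⟩, .inl hdisc⟩
  omega

end Graph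

section Superpower

variable {G : Type*} [Group G]

theorem superpowerGraph_adj {x y : G} : (superpowerGraph G).Adj x y ↔
    x ≠ y ∧ (orderOf x ∣ orderOf y ∨ orderOf y ∣ orderOf x) := by
  rw [superpowerGraph, SimpleGraph.fromRel_adj]

theorem superpowerGraph_adj_of_orderOf_eq {a b w : G} (hab : orderOf a = orderOf b)
    (hwb : w ≠ b) (h : (superpowerGraph G).Adj a w) : (superpowerGraph G).Adj b w := by
  rw [superpowerGraph_adj] at h ⊢
  exact ⟨hwb.symm, hab ▸ h.2⟩

theorem superpowerGraph_adj_of_orderOf_eq_two {x y w : G} {α : ℕ} (hα : α ≠ 0)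
    (hx : orderOf x = 2) (hy : orderOf y = 2 ^ α) (hwx : w ≠ x)
    (h : (superpowerGraph G).Adj y w) : (superpowerGraph G).Adj x w := by
  rw [superpowerGraph_adj] at h ⊢
  refine ⟨hwx.symm, ?_⟩
  rw [hx]
  rcases h.2 with h | h
  · rw [hy] at h
    exact (dvd_pow_self 2 hα).trans h |> .inl
  · rw [hy] at h
    obtain ⟨_ | j, -, hj⟩ := (Nat.dvd_prime_pow Nat.prime_two).mp h
    · exact .inr (by simp [hj])
    · exact .inl (hj ▸ dvd_pow_self 2 j.succ_ne_zero)

variable [Finite G]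

theorem gDeg_superpowerGraph_le_of_orderOf_eq_two {x y : G} {α : ℕ} (hα : 2 ≤ α)
    (hx : orderOf x = 2) (hy : orderOf y = 2 ^ α) :
    gDeg (superpowerGraph G) y ≤ gDeg (superpowerGraph G) x := by
  have hy4 : 4 ≤ orderOf y := hy ▸ Nat.pow_le_pow_right two_pos hα
  have hxy : (superpowerGraph G).Adj x y := superpowerGraph_adj.mpr
    ⟨by rintro rfl; omega, .inl (hx ▸ hy ▸ dvd_pow_self 2 (by omega))⟩
  exact gDeg_le_gDeg_of_adj hxy fun w hw =>
    superpowerGraph_adj_of_orderOf_eq_two (by omega) hx hy hw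

/-- `v` and `v⁻¹` are closed twins, distinct as soon as `v` is not adjacent to everything. -/
theorem vertexConn_superpowerGraph_lt_gDeg {v b : G} (hv : orderOf v ≠ 2) (hbv : b ≠ v)
    (hvb : ¬ (superpowerGraph G).Adj v b) :
    vertexConn (superpowerGraph G) < gDeg (superpowerGraph G) v := by
  have hvinv : v⁻¹ ≠ v := by
    rw [Ne, inv_eq_iff_mul_eq_one, ← sq]
    intro h
    rcases (Nat.dvd_prime Nat.prime_two).mp (orderOf_dvd_of_pow_eq_one h) with h1 | h2
    · exact hvb (superpowerGraph_adj.mpr ⟨hbv.symm, .inl (h1 ▸ one_dvd _)⟩)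
    · exact hv h2
  exact vertexConn_lt_gDeg_of_twin
    (superpowerGraph_adj.mpr ⟨hvinv, .inl (orderOf_inv v ▸ dvd_rfl)⟩)
    (fun w hw => superpowerGraph_adj_of_orderOf_eq (orderOf_inv v) hw) hbv hvb

end Superpower

theorem Nat.Prime.not_two_pow_dvd_or_dvd_two_pow {q : ℕ} (hq : q.Prime) (hq2 : q ≠ 2)
    {α : ℕ} (hα : α ≠ 0) : ¬ (2 ^ α ∣ q ∨ q ∣ 2 ^ α) := by
  rintro (h | h)
  · exact hq2 ((Nat.prime_dvd_prime_iff_eq Nat.prime_two hq).mp ((dvd_pow_self 2 hα).trans h)).symm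
  · exact hq2 ((Nat.prime_dvd_prime_iff_eq hq Nat.prime_two).mp (hq.dvd_of_dvd_pow h))

theorem exists_orderOf_eq_odd_prime {G : Type*} [Group G] [Finite G]
    (h : ¬ ∃ n : ℕ, Nat.card G = 2 ^ n) : ∃ (z : G) (q : ℕ), q.Prime ∧ q ≠ 2 ∧ orderOf z = q := by
  obtain ⟨q, hq, hqG, hq2⟩ : ∃ q : ℕ, q.Prime ∧ q ∣ Nat.card G ∧ q ≠ 2 := by
    by_contra! h2
    exact h ⟨_, Nat.eq_prime_pow_of_unique_prime_dvd Nat.card_pos.ne' fun hd hdG => h2 _ hd hdG⟩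
  have := Fact.mk hq
  obtain ⟨z, hz⟩ := exists_prime_orderOf_dvd_card' q hqG
  exact ⟨z, q, hq, hq2, hz⟩

/-- Let `G` be a finite group that is not a `p`-group, such that
some `x ∈ G` has degree equal to the minimum degree of the order superpower
graph, and the minimum degree equals the vertex connectivity. Then `G` has no
element of order `2^α` with `α ≥ 2`. -/
theorem stmt_17 (G : Type*) [Group G] [Fintype G]
    (hnp : ¬ ∃ p n : ℕ, p.Prime ∧ Nat.card G = p ^ n)
    (hx : ∃ x : G, gDeg (superpowerGraph G) x = minDeg (superpowerGraph G))
    (heq : minDeg (superpowerGraph G) = vertexConn (superpowerGraph G)) :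
    ∀ (y : G) (α : ℕ), 2 ≤ α → orderOf y ≠ 2 ^ α := by
  intro y α hα hy
  obtain ⟨x, hx⟩ := hx
  obtain ⟨z, q, hq, hq2, hz⟩ :=
    exists_orderOf_eq_odd_prime fun ⟨n, hn⟩ => hnp ⟨2, n, Nat.prime_two, hn⟩
  have hinc : ¬ (orderOf y ∣ orderOf z ∨ orderOf z ∣ orderOf y) := by
    rw [hy, hz]
    exact hq.not_two_pow_dvd_or_dvd_two_pow hq2 (by omega)
  have hzy : z ≠ y := by
    rintro rfl
    exact hinc (.inl dvd_rfl)
  have hyz : ¬ (superpowerGraph G).Adj y z := fun h => hinc (superpowerGraph_adj.mp h).2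
  obtain ⟨v, hv, hv2⟩ :
      ∃ v, gDeg (superpowerGraph G) v = minDeg (superpowerGraph G) ∧ orderOf v ≠ 2 := by
    by_cases hx2 : orderOf x = 2
    · have hle := gDeg_superpowerGraph_le_of_orderOf_eq_two hα hx2 hy
      refine ⟨y, le_antisymm (hx ▸ hle) (minDeg_le_gDeg _ y), ?_⟩
      have := Nat.pow_le_pow_right two_pos hα
      omega
    · exact ⟨x, hx, hx2⟩
  obtain ⟨b, hbv, hvb⟩ := exists_not_adj_of_gDeg_eq_minDeg hzy hyz hv
  have := vertexConn_superpowerGraph_lt_gDeg hv2 hbv hvb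
  omega
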